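/- arXiv:1909.06223 — 2 statements merged into one kernel-verified Lean document; each statement's English description precedes it below -/
import Mathlib

section
/- Every non-abelian finite nilpotent group (in particular, every non-abelian finite p-group) is irreducibly spark deficient: every irreducible unitary representation of dimension greater than 1 is spark deficient. -/
/-!
A nontrivial nilpotent group has a nontrivial centre, and by Schur's lemma a central element
`z ≠ 1` acts on an irreducible representation as a scalar `c`, so `π z f = c • π 1 f` for
every `f`: no subfamily of the orbit containing both `1` and `z` is linearly independent.
Such subfamilies of size `dim H ≥ 2` exist because an irreducible representation is spanned
by any orbit, whence `dim H ≤ |G|` (which also forces `G` to be nontrivial).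
-/

open scoped InnerProductSpace

/-- A family of vectors in a complex vector space is *full spark* if every subfamily
of size `Module.finrank ℂ V` (the dimension of the space) is linearly independent. -/
def IsFullSpark {ι V : Type*} [AddCommGroup V] [Module ℂ V] (v : ι → V) : Prop :=
  ∀ s : Finset ι, s.card = Module.finrank ℂ V →
    LinearIndependent ℂ (fun i : s => v (i : ι))

open Module

theorem not_isFullSpark_of_eq_smul {ι V : Type*} [Fintype ι] [AddCommGroup V] [Module ℂ V]
    {v : ι → V} {i j : ι} (hij : i ≠ j) {c : ℂ} (hvj : v j = c • v i)
    (hV : 2 ≤ finrank ℂ V) (hι : finrank ℂ V ≤ Fintype.card ι) : ¬ IsFullSpark v := by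
  classical
  intro hv
  have hpair : ({i, j} : Finset ι).card ≤ finrank ℂ V := by
    rwa [Finset.card_pair hij]
  obtain ⟨s, hijs, hs⟩ := Finset.exists_superset_card_eq hpair hι
  have hind : LinearIndepOn ℂ v {i, j} :=
    LinearIndepOn.mono (s := (s : Set ι)) (hv s hs) (by simpa using Finset.coe_subset.mpr hijs)
  have hdep : c • v i + (-1 : ℂ) • v j = 0 := by rw [hvj]; module
  exact one_ne_zero (neg_eq_zero.mp ((LinearIndepOn.pair_iff v hij).mp hind c (-1) hdep).2)

section Irreducible

variable {K G H : Type*} [Field K] [Monoid G] [AddCommGroup H] [Module K H]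
  {π : G →* (H →ₗ[K] H)}

theorem finrank_le_card_of_irreducible [Fintype G] [Nontrivial H] [FiniteDimensional K H]
    (hirred : ∀ U : Submodule K H, (∀ g, U.map (π g) ≤ U) → U = ⊥ ∨ U = ⊤) :
    finrank K H ≤ Fintype.card G := by
  obtain ⟨v, hv⟩ := exists_ne (0 : H)
  set U := Submodule.span K (Set.range fun g : G => π g v)
  have hUinv : ∀ g, U.map (π g) ≤ U := by
    intro g
    rw [Submodule.map_span, Submodule.span_le]
    rintro _ ⟨_, ⟨h, rfl⟩, rfl⟩
    exact Submodule.subset_span ⟨g * h, by simp only [map_mul, End.mul_apply]⟩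
  have hvU : v ∈ U := Submodule.subset_span ⟨1, by simp⟩
  have hUtop : U = ⊤ :=
    (hirred U hUinv).resolve_left fun h => hv (by rwa [h, Submodule.mem_bot] at hvU)
  calc finrank K H = finrank K U := by rw [hUtop, finrank_top]
    _ ≤ Fintype.card G := finrank_range_le_card _

theorem exists_eq_smul_of_mem_center_of_irreducible [IsAlgClosed K] [Nontrivial H]
    [FiniteDimensional K H]
    (hirred : ∀ U : Submodule K H, (∀ g, U.map (π g) ≤ U) → U = ⊥ ∨ U = ⊤)
    {z : G} (hz : z ∈ Submonoid.center G) : ∃ c : K, ∀ v, π z v = c • v := by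
  obtain ⟨c, hc⟩ := End.exists_eigenvalue (π z)
  have hinv : ∀ g, (End.eigenspace (π z) c).map (π g) ≤ End.eigenspace (π z) c := by
    rintro g _ ⟨w, hw, rfl⟩
    rw [SetLike.mem_coe, End.mem_eigenspace_iff] at hw
    rw [End.mem_eigenspace_iff]
    calc π z (π g w) = π (z * g) w := by rw [map_mul]; rfl
      _ = π (g * z) w := by rw [Submonoid.mem_center_iff.mp hz g]
      _ = c • π g w := by rw [map_mul, End.mul_apply, hw, map_smul]
  have htop := (hirred _ hinv).resolve_left hc
  exact ⟨c, fun v => End.mem_eigenspace_iff.mp (htop ▸ Submodule.mem_top)⟩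

end Irreducible

theorem irreduciblySparkDeficient_of_nilpotent_general
    {G : Type*} [Group G] [Fintype G] [Group.IsNilpotent G]
    (H : Type*) [NormedAddCommGroup H] [InnerProductSpace ℂ H] [FiniteDimensional ℂ H]
    (π : G →* (H →ₗ[ℂ] H))
    (hirred : ∀ U : Submodule ℂ H, (∀ g, U.map (π g) ≤ U) → U = ⊥ ∨ U = ⊤)
    (hdim : 1 < Module.finrank ℂ H) :
    ∀ f : H, ¬ IsFullSpark (fun g : G => π g f) := by
  intro f
  have : Nontrivial H := Module.nontrivial_of_finrank_pos (R := ℂ) (by omega)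
  have hcard := finrank_le_card_of_irreducible hirred
  have : Nontrivial G := Fintype.one_lt_card_iff_nontrivial.mp (by omega)
  obtain ⟨⟨z, hz⟩, hz1⟩ :=
    Subgroup.ne_bot_iff_exists_ne_one.mp (Group.IsNilpotent.center_ne_bot G)
  obtain ⟨c, hc⟩ := exists_eq_smul_of_mem_center_of_irreducible hirred hz
  refine not_isFullSpark_of_eq_smul (i := 1) (j := z) (c := c) ?_ ?_ hdim hcard
  · exact fun h => hz1 (Subtype.ext h.symm)
  · rw [hc, map_one, End.one_apply]

/-- Every non-abelian finite nilpotent group (in particular every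
non-abelian finite `p`-group) is irreducibly spark deficient: every irreducible unitary
representation of dimension `> 1` is spark deficient. -/
theorem irreduciblySparkDeficient_of_nilpotent
    {G : Type*} [Group G] [Fintype G] [Group.IsNilpotent G]
    (hnonab : ∃ a b : G, a * b ≠ b * a)
    (H : Type*) [NormedAddCommGroup H] [InnerProductSpace ℂ H] [FiniteDimensional ℂ H]
    (π : G →* (H →ₗ[ℂ] H))
    (hunitary : ∀ g (v w : H), ⟪π g v, π g w⟫_ℂ = ⟪v, w⟫_ℂ)
    (hirred : ∀ U : Submodule ℂ H, (∀ g, U.map (π g) ≤ U) → U = ⊥ ∨ U = ⊤)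
    (hdim : 1 < Module.finrank ℂ H) :
    ∀ f : H, ¬ IsFullSpark (fun g : G => π g f) :=
  irreduciblySparkDeficient_of_nilpotent_general H π hirred hdim
end

section
/- Let N be an even positive integer, let H be a non-trivial subgroup of (ℤ/Nℤ)^×, let m be an integer with gcd(m, N) = 1, and let π be the irreducible unitary representation of G = ℤ_N ⋊ H on ℂ^H (the space of functions H → ℂ) defined by (π(x,s)f)(h) = e^{2πi m h^{−1} x / N} · f(s^{−1}h) for (x,s) ∈ G and h ∈ H. Then the family (π(g)v)_{g∈G} is spark deficient for every v ∈ ℂ^H. -/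
open scoped InnerProductSpace

/-- The action of a subgroup `H` of `(ℤ/Nℤ)ˣ` on `ℤ/Nℤ` (written multiplicatively),
used to form the semidirect product `ℤ_N ⋊ H` with multiplication
`(x,a)(y,b) = (x + a·y, a·b)`. -/
def zmodAut (N : ℕ) (H : Subgroup (ZMod N)ˣ) :
    H →* MulAut (Multiplicative (ZMod N)) where
  toFun a := AddEquiv.toMultiplicative
    ((DistribMulAction.toAddAut (ZMod N)ˣ (ZMod N)) (a : (ZMod N)ˣ))
  map_one' := by ext x; simp
  map_mul' a b := by ext x; simp [mul_smul]

/-!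
Since `N` is even, every unit of `ℤ/Nℤ` is odd and therefore fixes `N/2`. Hence the exponent in
`π(N/2, 1)` is `2πi·m·(N/2)/N = πim` for every `h`, and as `gcd(m, N) = 1` forces `m` odd,
`π(N/2, 1) = -1`. So `π(N/2, 1) v = -π(1) v`: two members of the orbit are proportional, and since
`dim ℂ^H = |H| ≥ 2`, any subfamily of size `|H|` containing both is linearly dependent.
-/

instance SemidirectProduct.instFinite {N G : Type*} [Group N] [Group G] {φ : G →* MulAut N}
    [Finite N] [Finite G] : Finite (N ⋊[φ] G) :=
  Finite.of_equiv _ SemidirectProduct.equivProd.symm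

theorem not_isFullSpark_of_eq_smul_s17 {ι V : Type*} [Finite ι] [AddCommGroup V] [Module ℂ V]
    {v : ι → V} {i j : ι} (hij : i ≠ j) {c : ℂ} (hv : v i = c • v j)
    (hdim : 2 ≤ Module.finrank ℂ V) (hcard : Module.finrank ℂ V ≤ Nat.card ι) :
    ¬ IsFullSpark v := by
  classical
  have := Fintype.ofFinite ι
  intro hfs
  obtain ⟨s, hijs, hs⟩ := Finset.exists_superset_card_eq (s := {i, j})
    (n := Module.finrank ℂ V) (by rwa [Finset.card_pair hij])
    (by rwa [← Nat.card_eq_fintype_card])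
  have hpair : LinearIndepOn ℂ v {i, j} :=
    LinearIndepOn.mono (s := (s : Set ι)) (hfs s hs)
      (by rw [← Finset.coe_pair]; exact_mod_cast hijs)
  exact one_ne_zero ((LinearIndepOn.pair_iff v hij).mp hpair 1 (-c) (by simp [hv])).1

theorem Int.odd_of_gcd_eq_one_of_even {m : ℤ} {N : ℕ} (hN : Even N) (hm : Int.gcd m N = 1) :
    Odd m := by
  have hcop : Nat.Coprime m.natAbs N := hm
  exact Int.natAbs_odd.mp ((hcop.coprime_dvd_right (even_iff_two_dvd.mp hN)).odd_of_right)

namespace ZMod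

variable {N : ℕ} [NeZero N]

theorem natCast_half_ne_zero (hN : Even N) : ((N / 2 : ℕ) : ZMod N) ≠ 0 := by
  obtain ⟨r, hr⟩ := hN
  have hN0 := NeZero.ne N
  rw [Ne, natCast_eq_zero_iff]
  intro h
  have := Nat.le_of_dvd (by omega) h
  omega

theorem unit_mul_natCast_half (hN : Even N) (u : (ZMod N)ˣ) :
    (u : ZMod N) * (N / 2 : ℕ) = (N / 2 : ℕ) := by
  obtain ⟨k, hk⟩ :=
    ((val_coe_unit_coprime u).coprime_dvd_right (even_iff_two_dvd.mp hN)).odd_of_right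
  obtain ⟨r, rfl⟩ := hN
  have h0 : ((r + r : ℕ) : ZMod (r + r)) = 0 := natCast_self _
  rw [show (r + r) / 2 = r by omega, ← natCast_zmod_val (u : ZMod (r + r)), hk]
  push_cast at h0 ⊢
  linear_combination (k : ZMod (r + r)) * h0

end ZMod

theorem Complex.exp_two_pi_I_mul_half_eq_neg_one {m : ℤ} (hm : Odd m) {N : ℕ} (hN : Even N)
    (hN0 : N ≠ 0) : exp (2 * Real.pi * I * m * ((N / 2 : ℕ) : ℂ) / N) = -1 := by
  obtain ⟨r, rfl⟩ := hN
  have hr : (r : ℂ) ≠ 0 := by exact_mod_cast (by omega : r ≠ 0)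
  have harg : 2 * Real.pi * I * m * (((r + r) / 2 : ℕ) : ℂ) / ((r + r : ℕ) : ℂ)
      = m * (Real.pi * I) := by
    rw [show (r + r) / 2 = r by omega]
    push_cast
    field_simp
    ring
  rw [harg, exp_int_mul, exp_pi_mul_I, hm.neg_one_zpow]

theorem map_ofAdd_half_eq_neg_one {N : ℕ} [NeZero N] (hNeven : Even N) {H : Subgroup (ZMod N)ˣ}
    {m : ℤ} (hm : Int.gcd m (N : ℤ) = 1)
    {π : (Multiplicative (ZMod N) ⋊[zmodAut N H] H) →* ((H → ℂ) →ₗ[ℂ] (H → ℂ))}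
    (hπ : ∀ (x : ZMod N) (s : H) (f : H → ℂ) (h : H),
      π ⟨Multiplicative.ofAdd x, s⟩ f h =
        Complex.exp (2 * Real.pi * Complex.I * (m : ℂ) *
            ((((((h⁻¹ : H) : (ZMod N)ˣ) : ZMod N) * x).val : ℂ)) / (N : ℂ)) *
          f (s⁻¹ * h)) :
    π ⟨Multiplicative.ofAdd (N / 2 : ℕ), 1⟩ = -1 := by
  refine LinearMap.ext fun f => funext fun h => ?_
  rw [hπ, ZMod.unit_mul_natCast_half hNeven,
    ZMod.val_natCast_of_lt (Nat.div_lt_self (Nat.pos_of_ne_zero (NeZero.ne N)) one_lt_two),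
    Complex.exp_two_pi_I_mul_half_eq_neg_one (Int.odd_of_gcd_eq_one_of_even hNeven hm) hNeven
      (NeZero.ne N)]
  simp

/-- For `N` even, `H` a non-trivial subgroup of `(ℤ/Nℤ)ˣ`, and
`gcd(m,N) = 1`, the irreducible unitary representation `π` of `G = ℤ_N ⋊ H` on `ℂ^H`
given by `(π(x,s)f)(h) = e^{2πi m h⁻¹x/N} f(s⁻¹h)` is spark deficient: every orbit
`(π(g)v)_{g∈G}` fails to be full spark. -/
theorem sparkDeficient_induced_rep_of_even
    (N : ℕ) [NeZero N] (hNeven : Even N)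
    (H : Subgroup (ZMod N)ˣ) (hH : H ≠ ⊥)
    (m : ℤ) (hm : Int.gcd m (N : ℤ) = 1)
    (π : (Multiplicative (ZMod N) ⋊[zmodAut N H] H) →* ((H → ℂ) →ₗ[ℂ] (H → ℂ)))
    (hπ : ∀ (x : ZMod N) (s : H) (f : H → ℂ) (h : H),
      π ⟨Multiplicative.ofAdd x, s⟩ f h =
        Complex.exp (2 * Real.pi * Complex.I * (m : ℂ) *
            ((((((h⁻¹ : H) : (ZMod N)ˣ) : ZMod N) * x).val : ℂ)) / (N : ℂ)) *
          f (s⁻¹ * h)) :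
    ∀ v : H → ℂ,
      ¬ IsFullSpark (fun g : Multiplicative (ZMod N) ⋊[zmodAut N H] H => π g v) := by
  classical
  intro v
  have hdim : Module.finrank ℂ (H → ℂ) = Nat.card H := by
    rw [Module.finrank_fintype_fun_eq_card, Nat.card_eq_fintype_card]
  refine not_isFullSpark_of_eq_smul_s17 (i := ⟨.ofAdd (N / 2 : ℕ), 1⟩) (j := 1) (c := -1) ?_ ?_ ?_ ?_
  · intro h
    exact ZMod.natCast_half_ne_zero hNeven (congrArg (fun g => g.left.toAdd) h)
  · rw [map_ofAdd_half_eq_neg_one hNeven hm hπ, map_one]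
    simp
  · rw [hdim]
    exact (Subgroup.one_lt_card_iff_ne_bot H).mpr hH
  · rw [hdim, SemidirectProduct.card]
    exact Nat.le_mul_of_pos_left _ Nat.card_pos
end
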